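/- arXiv:1810.02218 — 4 statements merged into one kernel-verified Lean document; each statement's English description precedes it below -/
import Mathlib

section
/- Let Y' → Y be a morphism of schemes over F_p. If the relative Frobenius morphism of Y' over Y is an isomorphism (i.e. Y' is relatively perfect over Y) and Y' → Y is of finite presentation and flat, then Y' → Y is étale in each residue characteristic-p fiber; in particular, if Y' → Y is smooth and relatively perfect then Ω^1_{Y'/Y} = 0. -/
open CategoryTheory

/-! In characteristic `p`, a square-zero thickening `B → B ⧸ I` carries a canonical Frobenius
lift `B ⧸ I → B`, `x mod I ↦ x ^ p`, well defined because `x ^ p = 0` for `x ∈ I`. Relative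
perfectness of `S` over `R` says that a ring map out of `S` is the same as a map out of `R`
together with a compatible map out of `S` precomposed with Frobenius. Feeding the Frobenius lift
into this universal property lifts every `R`-algebra map `S → B ⧸ I` uniquely to `S → B`, so
`S` is formally étale over `R`; étaleness and `Ω[S⁄R] = 0` follow. -/

/-- A ring map `R → S` in characteristic `p` is *relatively perfect* if the square
formed by the absolute Frobenius endomorphisms of `R` and `S` and the structure map
is cocartesian in the category of commutative rings (this corresponds to the
cartesianness of the Frobenius square of schemes, i.e. the relative Frobenius
`Y' → Y'^{(p)}` being an isomorphism). -/
def RelativelyPerfect (R S : Type) [CommRing R] [CommRing S] [Algebra R S]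
    (p : ℕ) [Fact p.Prime] [CharP R p] [CharP S p] : Prop :=
  IsPushout
    (CommRingCat.ofHom (frobenius R p))
    (CommRingCat.ofHom (algebraMap R S))
    (CommRingCat.ofHom (algebraMap R S))
    (CommRingCat.ofHom (frobenius S p))

namespace Ideal.Quotient

variable {B : Type*} [CommRing B] (p : ℕ) [Fact p.Prime] [CharP B p] {I : Ideal B}
  (hI : I ^ 2 = ⊥)

def frobeniusLift : B ⧸ I →+* B :=
  lift I (frobenius B p) fun _ hx ↦ pow_eq_zero_of_mem hI (Fact.out : p.Prime).two_le hx

@[simp]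
lemma frobeniusLift_mk (x : B) : frobeniusLift p hI (mk I x) = x ^ p := rfl

@[simp]
lemma mk_frobeniusLift (u : B ⧸ I) : mk I (frobeniusLift p hI u) = u ^ p := by
  obtain ⟨x, rfl⟩ := mk_surjective u
  simp

end Ideal.Quotient

lemma CharP.of_algebra_of_prime (R B : Type*) [CommRing R] [CommRing B] [Algebra R B]
    [Nontrivial B] (p : ℕ) [Fact p.Prime] [CharP R p] : CharP B p :=
  (CharP.charP_iff_prime_eq_zero Fact.out).2 <| by
    rw [← map_natCast (algebraMap R B), CharP.cast_eq_zero, map_zero]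

namespace RelativelyPerfect

variable {p : ℕ} [Fact p.Prime] {R S : Type} [CommRing R] [CommRing S] [Algebra R S]
  [CharP R p] [CharP S p] (hrp : RelativelyPerfect R S p) {T : Type} [CommRing T]
include hrp

lemma ringHom_ext {g₁ g₂ : S →+* T}
    (halg : g₁.comp (algebraMap R S) = g₂.comp (algebraMap R S))
    (hpow : ∀ s, g₁ (s ^ p) = g₂ (s ^ p)) : g₁ = g₂ :=
  congrArg CommRingCat.Hom.hom <|
    hrp.hom_ext (k := CommRingCat.ofHom g₁) (l := CommRingCat.ofHom g₂)
      (by ext r; exact congr($halg r)) (by ext s; exact hpow s)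

lemma exists_ringHom (a : R →+* T) (b : S →+* T) (h : ∀ r, a (r ^ p) = b (algebraMap R S r)) :
    ∃ ψ : S →+* T, ψ.comp (algebraMap R S) = a ∧ ∀ s, ψ (s ^ p) = b s := by
  have w : CommRingCat.ofHom (frobenius R p) ≫ CommRingCat.ofHom a =
      CommRingCat.ofHom (algebraMap R S) ≫ CommRingCat.ofHom b := by
    ext r; exact h r
  exact ⟨(hrp.desc _ _ w).hom, congr(($(hrp.inl_desc _ _ w)).hom),
    fun s ↦ congr(($(hrp.inr_desc _ _ w)).hom s)⟩

lemma formallyUnramified : Algebra.FormallyUnramified R S := by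
  rw [Algebra.FormallyUnramified.iff_comp_injective]
  intro B _ _ I hI g₁ g₂ hg
  obtain hB | hB := subsingleton_or_nontrivial B
  · exact Subsingleton.elim _ _
  have := CharP.of_algebra_of_prime R B p
  refine AlgHom.coe_ringHom_injective (hrp.ringHom_ext (by ext r; simp) fun s ↦ ?_)
  have hs : Ideal.Quotient.mk I (g₁ s) = Ideal.Quotient.mk I (g₂ s) := congr($hg s)
  change g₁ (s ^ p) = g₂ (s ^ p)
  rw [map_pow, map_pow, ← Ideal.Quotient.frobeniusLift_mk p hI, hs,
    Ideal.Quotient.frobeniusLift_mk]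

lemma formallySmooth : Algebra.FormallySmooth R S := by
  refine Algebra.FormallySmooth.of_comp_surjective fun B _ _ I hI f ↦ ?_
  obtain hB | hB := subsingleton_or_nontrivial B
  · have : Subsingleton (B ⧸ I) := Ideal.Quotient.mk_surjective.subsingleton
    exact ⟨default, Subsingleton.elim _ _⟩
  have := CharP.of_algebra_of_prime R B p
  obtain ⟨ψ, hψalg, hψpow⟩ := hrp.exists_ringHom (algebraMap R B)
    ((Ideal.Quotient.frobeniusLift p hI).comp f.toRingHom) fun r ↦ by
      simp [← Ideal.Quotient.mk_algebraMap]
  refine ⟨{ ψ with commutes' := fun r ↦ congr($hψalg r) },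
    AlgHom.coe_ringHom_injective (hrp.ringHom_ext ?_ fun s ↦ ?_)⟩
  · ext r; simp
  · simp [hψpow]

end RelativelyPerfect

/-- **Relatively perfect + flat + finitely presented ⇒ étale, and
smooth + relatively perfect ⇒ `Ω¹ = 0`** (affine version of the statement for
morphisms `Y' → Y` of `𝔽_p`-schemes; here all fibers have residue characteristic `p`,
so "étale in each residue characteristic-`p` fiber" means étale). -/
theorem stmt_4 (p : ℕ) [Fact p.Prime] (R S : Type) [CommRing R] [CommRing S]
    [Algebra R S] [CharP R p] [CharP S p]
    (hrp : RelativelyPerfect R S p) :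
    (Algebra.FinitePresentation R S → Module.Flat R S → Algebra.Etale R S) ∧
    (Algebra.Smooth R S → Subsingleton (Ω[S⁄R])) := by
  have := hrp.formallyUnramified
  have := hrp.formallySmooth
  have : Algebra.FormallyEtale R S := .of_formallyUnramified_and_formallySmooth
  exact ⟨fun _ _ ↦ {}, fun _ ↦ inferInstance⟩
end

section
/- Let Y be a scheme over F_p and Y' a relatively perfect Y-scheme. Then for any étale morphism Y'' → Y', the scheme Y'' is also relatively perfect over Y. -/
/-!
Let `B ⊆ T` be the `S`-subalgebra generated by `p`-th powers. Then `T` is finite over `B`, and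
in `T ⊗[B] T` each `1 ⊗ t - t ⊗ 1` has vanishing `p`-th power; as `T` is unramified over `B`,
the diagonal ideal is generated by an idempotent, which must therefore vanish. So `B → T` is a
finite epimorphism, hence surjective: `T` is generated over `S` by `p`-th powers. This gives
uniqueness in the universal property of the Frobenius square of an étale `S → T`. For
existence, a compatible pair `d : S → A`, `b : T → A` makes the fibre product
`A ×_{Frob, A, b} T` an `S`-algebra mapping onto `T` with nil kernel, and formal smoothness
provides a section. Finally, relatively perfect maps compose by pasting pushout squares.
-/

open CategoryTheory

open TensorProduct

theorem Algebra.FormallyUnramified.isEpi_of_isNilpotent {A B : Type*} [CommRing A]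
    [CommRing B] [Algebra A B] [FormallyUnramified A B] [EssFiniteType A B]
    (h : ∀ b : B, IsNilpotent ((1 : B) ⊗ₜ[A] b - b ⊗ₜ[A] 1)) : Algebra.IsEpi A B := by
  obtain ⟨e, he, he1⟩ := (iff_exists_tensorProduct (R := A) (S := B)).mp inferInstance
  have hnil : IsNilpotent (1 - e) := by
    have hmem : 1 - e ∈ Ideal.span (Set.range fun b : B => (1 : B) ⊗ₜ[A] b - b ⊗ₜ[A] 1) := by
      rw [KaehlerDifferential.span_range_eq_ideal]
      simp [KaehlerDifferential.ideal, he1]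
    exact mem_nilradical.mp (Ideal.span_le.mpr (Set.range_subset_iff.mpr h) hmem)
  have hunit : IsUnit e := by simpa using hnil.isUnit_one_sub
  refine (isEpi_iff_forall_one_tmul_eq A B).mpr fun b => sub_eq_zero.mp ?_
  exact hunit.mul_left_eq_zero.mp (he b)

theorem Algebra.FormallyUnramified.adjoin_range_pow_eq_top (p : ℕ) [Fact p.Prime]
    (S T : Type*) [CommRing S] [CommRing T] [Algebra S T] [CharP T p] [FormallyUnramified S T]
    [FiniteType S T] :
    adjoin S (Set.range fun t : T => t ^ p) = ⊤ := by
  set B := adjoin S (Set.range fun t : T => t ^ p)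
  have hpow (t : T) : t ^ p ∈ B := subset_adjoin ⟨t, rfl⟩
  have : FiniteType B T := .of_restrictScalars_finiteType S B T
  have : Algebra.IsIntegral B T := ⟨fun t =>
    IsIntegral.of_pow (Fact.out : p.Prime).pos (isIntegral_algebraMap (x := (⟨_, hpow t⟩ : B)))⟩
  have : Module.Finite B T := Algebra.IsIntegral.finite
  have : FormallyUnramified B T := .of_restrictScalars S B T
  have hepi : Algebra.IsEpi B T := by
    refine isEpi_of_isNilpotent fun t => ⟨p, ?_⟩
    rcases subsingleton_or_nontrivial (T ⊗[B] T) with _ | _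
    · exact Subsingleton.elim _ _
    have : CharP (T ⊗[B] T) p := (CharP.charP_iff_prime_eq_zero Fact.out).mpr <| by
      rw [← map_natCast (algebraMap T (T ⊗[B] T)), CharP.cast_eq_zero, map_zero]
    have ht : t ^ p = algebraMap B T ⟨t ^ p, hpow t⟩ := rfl
    rw [sub_pow_char, TensorProduct.tmul_pow, TensorProduct.tmul_pow, one_pow, ht,
      algebraMap_eq_smul_one, ← smul_tmul, sub_self]
  refine Algebra.eq_top_iff.mpr fun t => ?_
  obtain ⟨b, rfl⟩ := (isEpi_iff_surjective_algebraMap_of_finite.mp hepi) t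
  exact b.2

theorem Algebra.FormallySmooth.exists_section_of_ker_le_nilradical {R A B : Type*}
    [CommRing R] [CommRing A] [CommRing B] [Algebra R A] [Algebra R B]
    [FormallySmooth R A] [FinitePresentation R A] (g : B →ₐ[R] A)
    (hg : Function.Surjective g) (hker : RingHom.ker g ≤ nilradical B) :
    ∃ σ : A →ₐ[R] B, g.comp σ = AlgHom.id R A := by
  obtain ⟨n, f, hf, hfg⟩ := FinitePresentation.out (R := R) (A := A)
  choose x hx using fun i => hg (f (MvPolynomial.X i))
  let φ : MvPolynomial (Fin n) R →ₐ[R] B := MvPolynomial.aeval x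
  have hgφ : g.comp φ = f := MvPolynomial.algHom_ext fun i => by simp [φ, hx]
  let K : Ideal B := (RingHom.ker f).map φ
  have hKg : K ≤ RingHom.ker g := Ideal.map_le_iff_le_comap.mpr fun a ha => by
    simpa [RingHom.mem_ker, ← hgφ] using ha
  have hK : IsNilpotent K := (hfg.map _).isNilpotent_iff_le_nilradical.mpr (hKg.trans hker)
  let ψ : A →ₐ[R] B ⧸ K := AlgHom.liftOfSurjective f hf ((Ideal.Quotient.mkₐ R K).comp φ)
    fun a ha => Ideal.Quotient.eq_zero_iff_mem.mpr (Ideal.mem_map_of_mem _ ha)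
  let gbar : B ⧸ K →ₐ[R] A := Ideal.Quotient.liftₐ K g fun _ ha => RingHom.mem_ker.mp (hKg ha)
  obtain ⟨σ, hσ⟩ := FormallySmooth.exists_lift K hK ψ
  refine ⟨σ, (AlgHom.cancel_right hf).mp ?_⟩
  calc (g.comp σ).comp f = gbar.comp (((Ideal.Quotient.mkₐ R K).comp σ).comp f) := rfl
    _ = gbar.comp ((Ideal.Quotient.mkₐ R K).comp φ) := by
      rw [hσ]; exact congrArg gbar.comp (AlgHom.liftOfSurjective_comp ..)
    _ = (AlgHom.id R A).comp f := by rw [← hgφ]; rfl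

theorem Algebra.FormallyUnramified.ringHom_ext_of_frobenius (p : ℕ) [Fact p.Prime]
    {S T A : Type*} [CommRing S] [CommRing T] [CommRing A] [Algebra S T] [CharP T p]
    [FormallyUnramified S T] [FiniteType S T] {c₁ c₂ : T →+* A}
    (hS : c₁.comp (algebraMap S T) = c₂.comp (algebraMap S T))
    (hT : c₁.comp (frobenius T p) = c₂.comp (frobenius T p)) : c₁ = c₂ := by
  ext t
  have ht : t ∈ adjoin S (Set.range fun u : T => u ^ p) := by
    rw [adjoin_range_pow_eq_top]; trivial
  induction ht using adjoin_induction with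
  | mem x hx => obtain ⟨u, rfl⟩ := hx; exact RingHom.congr_fun hT u
  | algebraMap s => exact RingHom.congr_fun hS s
  | add x y _ _ hx hy => rw [map_add, map_add, hx, hy]
  | mul x y _ _ hx hy => rw [map_mul, map_mul, hx, hy]

theorem Algebra.Etale.exists_ringHom_comp_algebraMap_and_frobenius (p : ℕ) [Fact p.Prime]
    {S T A : Type*} [CommRing S] [CommRing T] [CommRing A] [Algebra S T] [CharP S p] [CharP T p]
    [Etale S T] (d : S →+* A) (b : T →+* A)
    (h : d.comp (frobenius S p) = b.comp (algebraMap S T)) :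
    ∃ c : T →+* A, c.comp (algebraMap S T) = d ∧ c.comp (frobenius T p) = b := by
  rcases subsingleton_or_nontrivial A with _ | _
  · exact ⟨b, RingHom.ext fun _ => Subsingleton.elim _ _,
      RingHom.ext fun _ => Subsingleton.elim _ _⟩
  have : CharP A p := (CharP.charP_iff_prime_eq_zero Fact.out).mpr <| by
    rw [← map_natCast d, CharP.cast_eq_zero, map_zero]
  -- the fibre product `A ×_{Frob, A, b} T`
  let C : Subring (A × T) :=
    RingHom.eqLocus ((frobenius A p).comp (RingHom.fst A T)) (b.comp (RingHom.snd A T))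
  let : Algebra S C :=
    (RingHom.codRestrict (d.prod (algebraMap S T)) C fun s =>
      (d.map_frobenius p s).symm.trans (RingHom.congr_fun h s)).toAlgebra
  let π : C →ₐ[S] T := { (RingHom.snd A T).comp C.subtype with commutes' := fun _ => rfl }
  have hπ : Function.Surjective π := by
    have hle : adjoin S (Set.range fun t : T => t ^ p) ≤ π.range := adjoin_le <| by
      rintro _ ⟨t, rfl⟩
      exact ⟨⟨(b t, t ^ p), by simp [C, frobenius_def]⟩, rfl⟩
    intro t
    exact hle (by rw [FormallyUnramified.adjoin_range_pow_eq_top]; trivial)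
  have hker : RingHom.ker π ≤ nilradical C := by
    rintro ⟨⟨a, t⟩, hat⟩ (ht : t = 0)
    subst ht
    have ha : a ^ p = 0 := by simpa [C, frobenius_def] using hat
    refine mem_nilradical.mpr ⟨p, Subtype.ext (Prod.ext ?_ ?_)⟩
    · simpa using ha
    · simp [zero_pow (Fact.out : p.Prime).ne_zero]
  obtain ⟨σ, hσ⟩ := FormallySmooth.exists_section_of_ker_le_nilradical π hπ hker
  refine ⟨(RingHom.fst A T).comp (C.subtype.comp σ), ?_, ?_⟩
  · ext s
    exact congrArg (fun z : C => (z : A × T).1) (σ.commutes s)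
  · ext t
    have hσt : ((σ t : C) : A × T).2 = t := AlgHom.congr_fun hσ t
    have hmem : frobenius A p ((σ t : C) : A × T).1 = b ((σ t : C) : A × T).2 := (σ t).2
    calc ((σ (t ^ p) : C) : A × T).1 = frobenius A p ((σ t : C) : A × T).1 := by
          simp [frobenius_def]
      _ = b t := by rw [hmem, hσt]

theorem RelativelyPerfect.of_etale (p : ℕ) [Fact p.Prime] (S T : Type) [CommRing S]
    [CommRing T] [Algebra S T] [CharP S p] [CharP T p] [Algebra.Etale S T] :
    RelativelyPerfect S T p := by
  have w : CommRingCat.ofHom (frobenius S p) ≫ CommRingCat.ofHom (algebraMap S T) =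
      CommRingCat.ofHom (algebraMap S T) ≫ CommRingCat.ofHom (frobenius T p) := by
    ext s; exact map_pow (algebraMap S T) s p
  have hdesc (s : Limits.PushoutCocone (CommRingCat.ofHom (frobenius S p))
      (CommRingCat.ofHom (algebraMap S T))) :=
    Algebra.Etale.exists_ringHom_comp_algebraMap_and_frobenius p s.inl.hom s.inr.hom
      (congrArg CommRingCat.Hom.hom s.condition)
  choose c hc using hdesc
  refine IsPushout.of_isColimit (Limits.PushoutCocone.IsColimit.mk w
    (fun s => CommRingCat.ofHom (c s)) (fun s => CommRingCat.hom_ext (hc s).1)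
    (fun s => CommRingCat.hom_ext (hc s).2) fun s m hl hr => CommRingCat.hom_ext ?_)
  exact Algebra.FormallyUnramified.ringHom_ext_of_frobenius p
    ((congrArg CommRingCat.Hom.hom hl).trans (hc s).1.symm)
    ((congrArg CommRingCat.Hom.hom hr).trans (hc s).2.symm)

theorem RelativelyPerfect.trans {p : ℕ} [Fact p.Prime] {R S T : Type} [CommRing R] [CommRing S]
    [CommRing T] [Algebra R S] [Algebra S T] [Algebra R T] [IsScalarTower R S T]
    [CharP R p] [CharP S p] [CharP T p] (hRS : RelativelyPerfect R S p)
    (hST : RelativelyPerfect S T p) : RelativelyPerfect R T p := by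
  have h := hRS.paste_vert hST
  rwa [← CommRingCat.ofHom_comp, ← IsScalarTower.algebraMap_eq] at h

/-- **Étale over relatively perfect is relatively perfect** (affine version):
if `Y' = Spec S` is relatively perfect over `Y = Spec R` (characteristic `p`) and
`Y'' = Spec T → Y'` is étale, then `Y''` is relatively perfect over `Y`. -/
theorem stmt_5 (p : ℕ) [Fact p.Prime] (R S T : Type) [CommRing R] [CommRing S]
    [CommRing T] [Algebra R S] [Algebra S T] [Algebra R T] [IsScalarTower R S T]
    [CharP R p] [CharP S p] [CharP T p]
    (hrp : RelativelyPerfect R S p)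
    (hetale : Algebra.Etale S T) :
    RelativelyPerfect R T p :=
  hrp.trans (.of_etale p S T)
end

section
/- A filtered colimit of henselian pairs (A_i, I_i) along maps carrying I_i into I_j is a henselian pair. -/
open Polynomial

set_option synthInstance.maxHeartbeats 1000000
set_option maxHeartbeats 1000000

section Aux

variable {ι : Type*} [Preorder ι] [IsDirected ι (· ≤ ·)] [Nonempty ι]
  {G : ι → Type*} [∀ i, CommRing (G i)]
  (f : ∀ i j, i ≤ j → G i →+* G j)
  [DirectedSystem G (fun i j h => f i j h)]

/-- Equality descent in a ring direct limit. -/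
theorem auxEqDescend {i j : ι} {x : G i} {y : G j}
    (h : Ring.DirectLimit.of G (fun i j h => f i j h) i x =
         Ring.DirectLimit.of G (fun i j h => f i j h) j y) :
    ∃ (k : ι) (hik : i ≤ k) (hjk : j ≤ k), f i k hik x = f j k hjk y := by
  obtain ⟨k0, hik, hjk⟩ := exists_ge_ge i j
  have h0 : Ring.DirectLimit.of G (fun i j h => f i j h) k0
      (f i k0 hik x - f j k0 hjk y) = 0 := by
    rw [map_sub, Ring.DirectLimit.of_f, Ring.DirectLimit.of_f, h, sub_self]
  obtain ⟨k, hk, h1⟩ := Ring.DirectLimit.of.zero_exact h0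
  refine ⟨k, hik.trans hk, hjk.trans hk, ?_⟩
  rw [map_sub] at h1
  rw [DirectedSystem.map_map (f := (f · · ·)) hik hk,
    DirectedSystem.map_map (f := (f · · ·)) hjk hk] at h1
  exact sub_eq_zero.mp h1

/-- Membership in the sup of the images of a compatible family of ideals. -/
theorem auxMemJ (I : ∀ i, Ideal (G i))
    (hmap : ∀ i j (h : i ≤ j), (I i).map (f i j h) ≤ I j)
    {x : Ring.DirectLimit G (fun i j h => f i j h)}
    (hx : x ∈ ⨆ i, (I i).map (Ring.DirectLimit.of G (fun i j h => f i j h) i)) :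
    ∃ (i : ι) (y : G i), y ∈ I i ∧
      Ring.DirectLimit.of G (fun i j h => f i j h) i y = x := by
  have hcomp : ∀ (i k : ι) (hik : i ≤ k),
      (I i).map (Ring.DirectLimit.of G (fun i j h => f i j h) i) ≤
      (I k).map (Ring.DirectLimit.of G (fun i j h => f i j h) k) := by
    intro i k hik
    have : Ring.DirectLimit.of G (fun i j h => f i j h) i =
        (Ring.DirectLimit.of G (fun i j h => f i j h) k).comp (f i k hik) :=
      RingHom.ext fun z => (Ring.DirectLimit.of_f (hij := hik) (x := z)).symm
    rw [this, ← Ideal.map_map]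
    exact Ideal.map_mono (hmap i k hik)
  have hdir : Directed (· ≤ ·)
      (fun i => (I i).map (Ring.DirectLimit.of G (fun i j h => f i j h) i)) := by
    intro i j
    obtain ⟨k, hik, hjk⟩ := exists_ge_ge i j
    exact ⟨k, hcomp i k hik, hcomp j k hjk⟩
  rw [Submodule.mem_iSup_of_directed _ hdir] at hx
  obtain ⟨i, hx⟩ := hx
  rw [Ideal.map] at hx
  refine Submodule.span_induction ?_ ?_ ?_ ?_ hx
  · rintro z ⟨y, hy, rfl⟩
    exact ⟨i, y, hy, rfl⟩
  · exact ⟨i, 0, zero_mem _, map_zero _⟩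
  · rintro a b _ _ ⟨j1, y1, hy1, rfl⟩ ⟨j2, y2, hy2, rfl⟩
    obtain ⟨k, h1, h2⟩ := exists_ge_ge j1 j2
    refine ⟨k, f j1 k h1 y1 + f j2 k h2 y2,
      add_mem (hmap j1 k h1 (Ideal.mem_map_of_mem _ hy1))
        (hmap j2 k h2 (Ideal.mem_map_of_mem _ hy2)), ?_⟩
    rw [map_add, Ring.DirectLimit.of_f, Ring.DirectLimit.of_f]
  · rintro r a _ ⟨j1, y1, hy1, rfl⟩
    obtain ⟨j2, r2, rfl⟩ := Ring.DirectLimit.exists_of r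
    obtain ⟨k, h1, h2⟩ := exists_ge_ge j1 j2
    refine ⟨k, f j2 k h2 r2 * f j1 k h1 y1,
      Ideal.mul_mem_left _ _ (hmap j1 k h1 (Ideal.mem_map_of_mem _ hy1)), ?_⟩
    rw [map_mul, Ring.DirectLimit.of_f, Ring.DirectLimit.of_f, smul_eq_mul]

end Aux

/-- **Filtered colimits of henselian pairs are henselian.**
Let `(G i, I i)` be a directed system of henselian pairs, along ring maps
`f i j : G i → G j` carrying `I i` into `I j`.  Then the colimit ring
`Ring.DirectLimit G f`, together with the ideal generated by the images of the
ideals `I i`, is again a henselian pair. -/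
theorem stmt_6 (ι : Type*) [Preorder ι] [IsDirected ι (· ≤ ·)] [Nonempty ι]
    [DecidableEq ι]
    (G : ι → Type*) [∀ i, CommRing (G i)]
    (f : ∀ i j, i ≤ j → G i →+* G j)
    [DirectedSystem G (fun i j h => f i j h)]
    (I : ∀ i, Ideal (G i))
    (hmap : ∀ i j (h : i ≤ j), (I i).map (f i j h) ≤ I j)
    (hhens : ∀ i, HenselianRing (G i) (I i)) :
    HenselianRing (Ring.DirectLimit G (fun i j h => f i j h))
      (⨆ i, (I i).map (Ring.DirectLimit.of G (fun i j h => f i j h) i)) := by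
  set J : Ideal (Ring.DirectLimit G (fun i j h => f i j h)) :=
    ⨆ i, (I i).map (Ring.DirectLimit.of G (fun i j h => f i j h) i) with hJ
  have hmemJ : ∀ (i : ι) (y : G i), y ∈ I i →
      Ring.DirectLimit.of G (fun i j h => f i j h) i y ∈ J := by
    intro i y hy
    exact (le_iSup (fun i => (I i).map (Ring.DirectLimit.of G (fun i j h => f i j h) i)) i)
      (Ideal.mem_map_of_mem _ hy)
  constructor
  · -- Jacobson radical condition
    intro x hx
    obtain ⟨i, y, hy, rfl⟩ := auxMemJ f I hmap hx
    rw [Ideal.mem_jacobson_bot]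
    intro z
    obtain ⟨j, w, rfl⟩ := Ring.DirectLimit.exists_of z
    obtain ⟨k, hik, hjk⟩ := exists_ge_ge i j
    have hrw : Ring.DirectLimit.of G (fun i j h => f i j h) i y *
        Ring.DirectLimit.of G (fun i j h => f i j h) j w + 1 =
        Ring.DirectLimit.of G (fun i j h => f i j h) k
          (f i k hik y * f j k hjk w + 1) := by
      rw [map_add, map_mul, Ring.DirectLimit.of_f, Ring.DirectLimit.of_f, map_one]
    rw [hrw]
    have hy' : f i k hik y ∈ I k := hmap i k hik (Ideal.mem_map_of_mem _ hy)
    have hj' := (hhens k).jac hy'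
    rw [Ideal.mem_jacobson_bot] at hj'
    exact (hj' (f j k hjk w)).map (Ring.DirectLimit.of G (fun i j h => f i j h) k)
  · -- Henselian lifting condition
    intro F hF a₀ haI hunit
    rcases subsingleton_or_nontrivial (Ring.DirectLimit G (fun i j h => f i j h)) with hsub | hnt
    · exact ⟨a₀, Subsingleton.elim _ _, by rw [sub_self]; exact zero_mem _⟩
    obtain ⟨m0, p0, hp0⟩ := Ring.DirectLimit.Polynomial.exists_of F
    have hlift : F ∈ lifts (Ring.DirectLimit.of G (fun i j h => f i j h) m0) :=
      (mem_lifts _).2 ⟨p0, hp0⟩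
    obtain ⟨p, hpmap, -, hpmonic⟩ := lifts_and_degree_eq_and_monic hlift hF
    obtain ⟨m1, b1, hb⟩ := Ring.DirectLimit.exists_of a₀
    obtain ⟨m, hm0, hm1⟩ := exists_ge_ge m0 m1
    set q0 : Polynomial (G m) := p.map (f m0 m hm0) with hq0
    set b0 : G m := f m1 m hm1 b1 with hb0
    have hofcomp : ∀ (j : ι) (hj : m ≤ j),
        (Ring.DirectLimit.of G (fun i j h => f i j h) j).comp (f m j hj) =
        Ring.DirectLimit.of G (fun i j h => f i j h) m :=
      fun j hj => RingHom.ext fun z => Ring.DirectLimit.of_f (hij := hj) (x := z)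
    have hq0map : q0.map (Ring.DirectLimit.of G (fun i j h => f i j h) m) = F := by
      rw [hq0, Polynomial.map_map]
      rw [show (Ring.DirectLimit.of G (fun i j h => f i j h) m).comp (f m0 m hm0) =
        Ring.DirectLimit.of G (fun i j h => f i j h) m0 from
        RingHom.ext fun z => Ring.DirectLimit.of_f (hij := hm0) (x := z), hpmap]
    have hq0monic : q0.Monic := hpmonic.map _
    have hb0of : Ring.DirectLimit.of G (fun i j h => f i j h) m b0 = a₀ := by
      rw [hb0, Ring.DirectLimit.of_f, hb]
    have hevalcomm : ∀ (j : ι) (hj : m ≤ j) (P : Polynomial (G m)) (c : G m),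
        (P.map (f m j hj)).eval (f m j hj c) = f m j hj (P.eval c) := by
      intro j hj P c
      rw [Polynomial.eval_map, Polynomial.eval₂_at_apply]
    have hevalof : ∀ (P : Polynomial (G m)) (c : G m),
        (P.map (Ring.DirectLimit.of G (fun i j h => f i j h) m)).eval
          (Ring.DirectLimit.of G (fun i j h => f i j h) m c) =
        Ring.DirectLimit.of G (fun i j h => f i j h) m (P.eval c) := by
      intro P c
      rw [Polynomial.eval_map, Polynomial.eval₂_at_apply]
    -- descend the evaluation condition
    have heval0 : Ring.DirectLimit.of G (fun i j h => f i j h) m (q0.eval b0) ∈ J := by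
      rw [← hevalof, hq0map, hb0of]; exact haI
    obtain ⟨i1, y1, hy1, hy1eq⟩ := auxMemJ f I hmap heval0
    obtain ⟨k1, hmk1, hik1, heq1⟩ := auxEqDescend f hy1eq.symm
    have heval1 : f m k1 hmk1 (q0.eval b0) ∈ I k1 := by
      rw [heq1]; exact hmap i1 k1 hik1 (Ideal.mem_map_of_mem _ hy1)
    -- descend the unit condition
    have hderiv0 : Ring.DirectLimit.of G (fun i j h => f i j h) m
        (q0.derivative.eval b0) = F.derivative.eval a₀ := by
      conv_rhs => rw [← hq0map, Polynomial.derivative_map, ← hb0of, hevalof]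
    obtain ⟨u, hu⟩ := hunit
    obtain ⟨e, he⟩ := Ideal.Quotient.mk_surjective (I := J) ((u⁻¹ : _ˣ) : _)
    have hde : F.derivative.eval a₀ * e - 1 ∈ J := by
      rw [← Ideal.Quotient.eq_zero_iff_mem, map_sub, map_mul, ← hu, he, map_one]
      simp
    obtain ⟨n, e1, rfl⟩ := Ring.DirectLimit.exists_of e
    obtain ⟨k, hmk, hnk⟩ := exists_ge_ge m n
    have hde' : Ring.DirectLimit.of G (fun i j h => f i j h) k
        (f m k hmk (q0.derivative.eval b0) * f n k hnk e1 - 1) ∈ J := by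
      rw [map_sub, map_mul, Ring.DirectLimit.of_f, Ring.DirectLimit.of_f, map_one, hderiv0]
      exact hde
    obtain ⟨i2, y2, hy2, hy2eq⟩ := auxMemJ f I hmap hde'
    obtain ⟨k2, hkk2, hik2, heq2⟩ := auxEqDescend f hy2eq.symm
    have hde2 : f m k2 (hmk.trans hkk2) (q0.derivative.eval b0) *
        f n k2 (hnk.trans hkk2) e1 - 1 ∈ I k2 := by
      have := heq2
      rw [map_sub, map_mul, map_one,
        DirectedSystem.map_map (f := (f · · ·)) hmk hkk2,
        DirectedSystem.map_map (f := (f · · ·)) hnk hkk2] at this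
      rw [this]
      exact hmap i2 k2 hik2 (Ideal.mem_map_of_mem _ hy2)
    -- common final index
    obtain ⟨l, hk1l, hk2l⟩ := exists_ge_ge k1 k2
    have hml : m ≤ l := hmk1.trans hk1l
    set q : Polynomial (G l) := q0.map (f m l hml) with hq
    set b : G l := f m l hml b0 with hbdef
    have hqmonic : q.Monic := hq0monic.map _
    have hqeval : q.eval b ∈ I l := by
      rw [hq, hbdef, hevalcomm l hml]
      rw [show f m l hml (q0.eval b0) = f k1 l hk1l (f m k1 hmk1 (q0.eval b0)) from
        (DirectedSystem.map_map (f := (f · · ·)) hmk1 hk1l _).symm]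
      exact hmap k1 l hk1l (Ideal.mem_map_of_mem _ heval1)
    have hqderiv : IsUnit (Ideal.Quotient.mk (I l) (q.derivative.eval b)) := by
      have hder : q.derivative.eval b = f m l hml (q0.derivative.eval b0) := by
        conv_lhs => rw [hq, hbdef, Polynomial.derivative_map, hevalcomm l hml]
      have hmem : q.derivative.eval b *
          f n l (hnk.trans (hkk2.trans hk2l)) e1 - 1 ∈ I l := by
        rw [hder]
        have h2 := hmap k2 l hk2l (Ideal.mem_map_of_mem _ hde2)
        rw [map_sub, map_mul, map_one,
          DirectedSystem.map_map (f := (f · · ·)) (hmk.trans hkk2) hk2l,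
          DirectedSystem.map_map (f := (f · · ·)) (hnk.trans hkk2) hk2l] at h2
        exact h2
      refine IsUnit.of_mul_eq_one
        (Ideal.Quotient.mk (I l) (f n l (hnk.trans (hkk2.trans hk2l)) e1)) ?_
      rw [← map_mul, ← map_one (Ideal.Quotient.mk (I l))]
      exact Ideal.Quotient.eq.mpr hmem
    obtain ⟨a, haroot, hadiff⟩ := (hhens l).is_henselian q hqmonic b hqeval hqderiv
    refine ⟨Ring.DirectLimit.of G (fun i j h => f i j h) l a, ?_, ?_⟩
    · have hFeq : q.map (Ring.DirectLimit.of G (fun i j h => f i j h) l) = F := by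
        rw [hq, Polynomial.map_map, hofcomp l hml, hq0map]
      have : F.eval (Ring.DirectLimit.of G (fun i j h => f i j h) l a) =
          Ring.DirectLimit.of G (fun i j h => f i j h) l (q.eval a) := by
        rw [← hFeq, Polynomial.eval_map, Polynomial.eval₂_at_apply]
      rw [Polynomial.IsRoot, this, haroot, map_zero]
    · have : Ring.DirectLimit.of G (fun i j h => f i j h) l a - a₀ =
          Ring.DirectLimit.of G (fun i j h => f i j h) l (a - b) := by
        rw [map_sub, hbdef, Ring.DirectLimit.of_f, hb0of]
      rw [this]
      exact hmemJ l (a - b) hadiff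
end

section
/- Let R be an F_p-algebra with a p-basis consisting of r elements t_1, …, t_r (so every element of R is uniquely a sum Σ x_I^p t^I over multi-indices I with 0 ≤ I < p). Then the Weil restriction along Frobenius of the affine line over R is representable by affine p^r-space: the functor sending an R-algebra S to S viewed via Frobenius is represented by R[x_I : 0 ≤ i(1),…,i(r) ≤ p−1], with universal map x ↦ Σ_I x_I^p t_1^{i(1)}⋯t_r^{i(r)}. -/
open TensorProduct

/-- `FrobTwist R p` is the ring `R` viewed as an `R`-algebra through the absolute
Frobenius `R → R`, `x ↦ x^p`.  (For an `R`-algebra `S`, the ring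
`S ⊗[R] FrobTwist R p` is then the coordinate ring of the Frobenius-twisted fiber
product `Spec S ×_{Spec R, Frob} Spec R`, so that the Weil restriction along
Frobenius of an `R`-scheme `X` has `S`-points `X(S ⊗[R] FrobTwist R p)`.) -/
def FrobTwist (R : Type*) (p : ℕ) : Type _ := R

instance (R : Type*) (p : ℕ) [CommRing R] : CommRing (FrobTwist R p) :=
  inferInstanceAs (CommRing R)

noncomputable instance (R : Type*) (p : ℕ) [CommRing R] [Fact p.Prime] [CharP R p] :
    Algebra R (FrobTwist R p) :=
  (frobenius R p).toAlgebra

/-- The element of `FrobTwist R p` corresponding to `x : R`. -/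
def FrobTwist.of (R : Type*) (p : ℕ) (x : R) : FrobTwist R p := x

/-! The `p`-basis hypothesis says precisely that the monomials `t^I` form an `R`-basis of `R`
viewed as an `R`-module through Frobenius. By base change they form an `S`-basis of
`S ⊗[R] FrobTwist R p`, so its elements are the unique combinations `∑ s_I ⊗ t^I`; and an
`R`-algebra map `R[x_I] → S` is the same as a choice of the `s_I = φ(x_I)`. -/

open MvPolynomial Module

theorem MvPolynomial.bijective_algHom_apply_X (σ R S : Type*) [CommSemiring R] [CommSemiring S]
    [Algebra R S] : Function.Bijective fun φ : MvPolynomial σ R →ₐ[R] S => fun i => φ (X i) :=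
  ⟨fun _ _ h => algHom_ext (congrFun h), fun s => ⟨aeval s, by ext i; exact aeval_X s i⟩⟩

theorem Module.Basis.bijective_sum_tmul {R M ι : Type*} (A : Type*) [CommSemiring R] [Semiring A]
    [Algebra R A] [AddCommMonoid M] [Module R M] [Fintype ι] (b : Basis ι R M) :
    Function.Bijective fun s : ι → A => ∑ i, s i ⊗ₜ[R] b i := by
  convert (Algebra.TensorProduct.basis A b).equivFun.symm.bijective using 1
  funext s
  simp [Basis.equivFun_symm_apply, TensorProduct.smul_tmul']

namespace FrobTwist

variable {R : Type*} {p : ℕ} [CommRing R] [Fact p.Prime] [CharP R p]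

theorem smul_of (c x : R) : c • of R p x = of R p (c ^ p * x) :=
  rfl

theorem linearCombination_of {ι : Type*} [Fintype ι] (v : ι → R) (c : ι → R) :
    Fintype.linearCombination R (fun i => of R p (v i)) c = of R p (∑ i, c i ^ p * v i) := by
  simp only [Fintype.linearCombination_apply, smul_of]
  rfl

noncomputable def basisOfPBasis {ι : Type*} [Fintype ι] (v : ι → R)
    (hv : ∀ x, ∃! c : ι → R, x = ∑ i, c i ^ p * v i) : Basis ι R (FrobTwist R p) :=
  Basis.ofEquivFun <| LinearEquiv.symm <|
    .ofBijective (Fintype.linearCombination R fun i => of R p (v i)) <|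
      Function.bijective_iff_existsUnique _ |>.mpr fun x =>
        (existsUnique_congr fun c => by rw [linearCombination_of]; exact eq_comm).mp (hv x)

theorem basisOfPBasis_apply {ι : Type*} [Fintype ι] (v : ι → R)
    (hv : ∀ x, ∃! c : ι → R, x = ∑ i, c i ^ p * v i) (i : ι) :
    basisOfPBasis v hv i = of R p (v i) := by
  classical
  simp [basisOfPBasis, Basis.coe_ofEquivFun]

end FrobTwist

/-- **Weil restriction along Frobenius of the affine line.**
Let `R` be an `𝔽_p`-algebra with a `p`-basis `t_1, …, t_r`, i.e. every element of
`R` is uniquely of the form `∑_I x_I^p t^I` over multi-indices `I : Fin r → Fin p`.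
Then the Weil restriction along Frobenius of the affine line over `R` is the affine
`p^r`-space `Spec R[x_I]`: for every `R`-algebra `S`, the map sending an `R`-algebra
homomorphism `φ : R[x_I] → S` to `∑_I φ(x_I) ⊗ t^I ∈ S ⊗[R] FrobTwist R p`
(the coordinate ring of the Frobenius twist `Spec S ×_{Spec R, Frob} Spec R`, whose
elements are the `S`-points of the Weil restriction of `𝔸¹`) is a bijection, and the
universal map to `𝔸¹` is `x ↦ ∑_I x_I^p t^I`. -/
theorem stmt_7 (p : ℕ) [Fact p.Prime] (R : Type*) [CommRing R] [CharP R p]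
    (r : ℕ) (t : Fin r → R)
    (hbasis : ∀ x : R, ∃! c : (Fin r → Fin p) → R,
      x = ∑ I : Fin r → Fin p, (c I) ^ p * ∏ i, t i ^ (I i : ℕ)) :
    ∀ (S : Type*) [CommRing S] [Algebra R S],
      Function.Bijective
        (fun φ : MvPolynomial (Fin r → Fin p) R →ₐ[R] S =>
          (∑ I : Fin r → Fin p,
            φ (MvPolynomial.X I) ⊗ₜ[R] FrobTwist.of R p (∏ i, t i ^ (I i : ℕ)) :
              S ⊗[R] FrobTwist R p)) ∧
      ∀ c : (Fin r → Fin p) → S,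
        MvPolynomial.aeval c
            (∑ I : Fin r → Fin p,
              (MvPolynomial.X I) ^ p * MvPolynomial.C (∏ i, t i ^ (I i : ℕ)))
          = ∑ I : Fin r → Fin p, (c I) ^ p * algebraMap R S (∏ i, t i ^ (I i : ℕ)) := by
  intro S _ _
  let b := FrobTwist.basisOfPBasis (fun I : Fin r → Fin p => ∏ i, t i ^ (I i : ℕ)) hbasis
  refine ⟨?_, fun c => by simp⟩
  have hbij := (b.bijective_sum_tmul S).comp (MvPolynomial.bijective_algHom_apply_X _ R S)
  simpa only [Function.comp_def, b, FrobTwist.basisOfPBasis_apply] using hbij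
end
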